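/- Let n be a natural number and let a, b be integers with gcd(a,b) = 1, b ≠ 0, and b ≠ ±1. Define the generalized Motzkin number M_{2n}(a,b) = ∑_{k=0}^{n} C(2n,2k) · Cat_k · a^k · b^{2n-2k}, where Cat_k is the k-th Catalan number. Then M_{2n}(a,b) ≠ 0, and the largest natural number e such that b^e divides M_{2n}(a,b) is equal to the largest natural number e such that b^e divides Cat_n. -/

import Mathlib

open Finset Nat

private lemma catalan_pos' (n : ℕ) : 0 < catalan n := by
  have h := succ_mul_catalan_eq_centralBinom n
  have h2 := Nat.centralBinom_pos n
  rcases Nat.eq_zero_or_pos (catalan n) with h0 | h0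
  · rw [h0, mul_zero] at h; omega
  · exact h0

private lemma cat_fact (n : ℕ) : catalan n * ((n + 1)! * n !) = (2 * n)! := by
  have h1 := succ_mul_catalan_eq_centralBinom n
  have h2 := Nat.choose_mul_factorial_mul_factorial (Nat.le_add_left n n)
  have hc : Nat.centralBinom n = (n + n).choose n := by
    rw [Nat.centralBinom, two_mul]
  calc catalan n * ((n + 1)! * n !) = ((n + 1) * catalan n) * n ! * n ! := by
        rw [Nat.factorial_succ]; ring
    _ = (n + n).choose n * n ! * n ! := by rw [h1, hc]
    _ = (2 * n)! := by
        rw [show 2 * n = n + n by ring]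
        simpa using h2

private lemma key_id (k m : ℕ) :
    catalan (k + m) * ((k + m).descFactorial m * (k + m + 1).descFactorial m) =
      (2 * (k + m)).choose (2 * k) * catalan k * (2 * m)! := by
  have hpos : 0 < k ! * (k + 1)! := by positivity
  apply Nat.eq_of_mul_eq_mul_right hpos
  have d1 : k ! * (k + m).descFactorial m = (k + m)! := by
    have := Nat.factorial_mul_descFactorial (show m ≤ k + m by omega)
    rwa [show k + m - m = k by omega] at this
  have d2 : (k + 1)! * (k + m + 1).descFactorial m = (k + m + 1)! := by
    have := Nat.factorial_mul_descFactorial (show m ≤ k + m + 1 by omega)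
    rwa [show k + m + 1 - m = k + 1 by omega] at this
  have c1 := cat_fact (k + m)
  have c2 := cat_fact k
  have ch : (2 * (k + m)).choose (2 * k) * (2 * k)! * (2 * m)! = (2 * (k + m))! := by
    have := Nat.choose_mul_factorial_mul_factorial (show 2 * k ≤ 2 * (k + m) by omega)
    rwa [show 2 * (k + m) - 2 * k = 2 * m by omega] at this
  calc catalan (k + m) * ((k + m).descFactorial m * (k + m + 1).descFactorial m) *
        (k ! * (k + 1)!)
      = catalan (k + m) * ((k + m + 1)! * (k + m)!) := by
        rw [← d1, ← d2]; ring
    _ = (2 * (k + m))! := c1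
    _ = (2 * (k + m)).choose (2 * k) * (2 * k)! * (2 * m)! := ch.symm
    _ = (2 * (k + m)).choose (2 * k) * (catalan k * ((k + 1)! * k !)) * (2 * m)! := by
        rw [c2]
    _ = (2 * (k + m)).choose (2 * k) * catalan k * (2 * m)! * (k ! * (k + 1)!) := by
        ring

private lemma fact_padic (p m : ℕ) (hp : p.Prime) (hm : 0 < m) :
    ((2 * m)!).factorization p + 1 ≤ 2 * m := by
  haveI : Fact p.Prime := ⟨hp⟩
  rw [Nat.factorization_def _ hp]
  have h := sub_one_mul_padicValNat_factorial (p := p) (2 * m)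
  have hs : 1 ≤ (p.digits (2 * m)).sum := by
    have hne : p.digits (2 * m) ≠ [] := Nat.digits_ne_nil_iff_ne_zero.mpr (by omega)
    have hlast := Nat.getLast_digit_ne_zero p (show 2 * m ≠ 0 by omega)
    have hmem := List.getLast_mem hne
    calc 1 ≤ (p.digits (2 * m)).getLast hne := by omega
      _ ≤ (p.digits (2 * m)).sum := List.single_le_sum (fun _ _ => Nat.zero_le _) _ hmem
  have hdle : (p.digits (2 * m)).sum ≤ 2 * m := Nat.digit_sum_le p (2 * m)
  have hp1 : 1 ≤ p - 1 := by have := hp.two_le; omega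
  have hv : padicValNat p (2 * m)! ≤ (p - 1) * padicValNat p (2 * m)! :=
    Nat.le_mul_of_pos_left _ (by omega)
  omega

private lemma key_dvd (n k E B : ℕ) (hk : k < n) (hB : 2 ≤ B)
    (hE : B ^ E ∣ catalan n) :
    B ^ (E + 1) ∣ (2 * n).choose (2 * k) * catalan k * B ^ (2 * (n - k)) := by
  obtain ⟨m, hmdef⟩ : ∃ m, m = n - k := ⟨n - k, rfl⟩
  rw [← hmdef]
  have hm1 : 1 ≤ m := by omega
  have hnkm : n = k + m := by omega
  have hchoose : (2 * n).choose (2 * k) ≠ 0 :=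
    Nat.pos_iff_ne_zero.mp (Nat.choose_pos (by omega))
  have hcatk : catalan k ≠ 0 := Nat.pos_iff_ne_zero.mp (catalan_pos' k)
  have hcatn : catalan n ≠ 0 := Nat.pos_iff_ne_zero.mp (catalan_pos' n)
  have hBne : B ≠ 0 := by omega
  have hRne : (2 * n).choose (2 * k) * catalan k * B ^ (2 * m) ≠ 0 := by
    positivity
  rw [← Nat.factorization_le_iff_dvd (pow_ne_zero _ hBne) hRne, Finsupp.le_def]
  intro p
  rw [Nat.factorization_pow, Finsupp.smul_apply, smul_eq_mul]
  by_cases ht : B.factorization p = 0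
  · simp [ht]
  have hp : p.Prime := by
    by_contra h
    exact ht (Nat.factorization_eq_zero_of_not_prime B h)
  have ht1 : 1 ≤ B.factorization p := by omega
  -- from hE
  have hEf : E * B.factorization p ≤ (catalan n).factorization p := by
    have := (Nat.factorization_le_iff_dvd (pow_ne_zero _ hBne) hcatn).mpr hE p
    rwa [Nat.factorization_pow, Finsupp.smul_apply, smul_eq_mul] at this
  -- identity bound
  have hX : (n).descFactorial m * (n + 1).descFactorial m ≠ 0 := by
    have h1 : ¬ n < m := by omega
    have h2 : ¬ n + 1 < m := by omega
    simp [Nat.mul_ne_zero_iff, Ne, Nat.descFactorial_eq_zero_iff_lt, h1, h2]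
  have hid := key_id k m
  rw [← hnkm] at hid
  have hfacle : (catalan n).factorization p ≤
      ((2 * n).choose (2 * k) * catalan k).factorization p +
        ((2 * m)!).factorization p := by
    have hL : (catalan n * (n.descFactorial m * (n + 1).descFactorial m)).factorization p
        = ((2 * n).choose (2 * k) * catalan k * (2 * m)!).factorization p := by rw [hid]
    rw [Nat.factorization_mul hcatn hX, Finsupp.add_apply,
      Nat.factorization_mul (Nat.mul_ne_zero hchoose hcatk) (Nat.factorial_ne_zero _),
      Finsupp.add_apply] at hL
    omega
  have hfl := fact_padic p m hp hm1
  -- final arithmetic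
  rw [Nat.factorization_mul (Nat.mul_ne_zero hchoose hcatk) (pow_ne_zero _ hBne),
    Finsupp.add_apply, Nat.factorization_pow, Finsupp.smul_apply, smul_eq_mul]
  set f := ((2 * n).choose (2 * k) * catalan k).factorization p
  set t := B.factorization p
  have key : 2 * m - 1 + t ≤ 2 * m * t := by
    obtain ⟨m', rfl⟩ : ∃ m', m = m' + 1 := ⟨m - 1, by omega⟩
    obtain ⟨t', ht'⟩ : ∃ t', t = t' + 1 := ⟨t - 1, by omega⟩
    rw [ht', show 2 * (m' + 1) - 1 = 2 * m' + 1 by omega]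
    nlinarith
  have hmul : (E + 1) * t = E * t + t := by ring
  omega

/-- Theorem 6, Eq. (28.3): for coprime `a b` with `b ∉ {0, 1, -1}`, the generalized
Motzkin number `M_{2n}(a,b) = ∑_{k=0}^{n} C(2n,2k) Cat_k a^k b^{2n-2k}` is nonzero, and
the largest power of `b` dividing it equals the largest power of `b` dividing the
Catalan number `Cat_n`. -/
theorem stmt_13 (n : ℕ) (a b : ℤ) (hab : Int.gcd a b = 1)
    (h0 : b ≠ 0) (h1 : b ≠ 1) (h2 : b ≠ -1) :
    (∑ k ∈ range (n + 1),
      ((2 * n).choose (2 * k) : ℤ) * (catalan k : ℤ) * a ^ k * b ^ (2 * n - 2 * k)) ≠ 0 ∧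
    ∃ E : ℕ,
      IsGreatest {e : ℕ | b ^ e ∣
        ∑ k ∈ range (n + 1),
          ((2 * n).choose (2 * k) : ℤ) * (catalan k : ℤ) * a ^ k * b ^ (2 * n - 2 * k)} E ∧
      IsGreatest {e : ℕ | b ^ e ∣ (catalan n : ℤ)} E := by
  set B := b.natAbs with hBdef
  have hB : 2 ≤ B := by simp only [hBdef]; omega
  have hcatpos : 0 < catalan n := catalan_pos' n
  set E := Nat.findGreatest (fun e => B ^ e ∣ catalan n) (catalan n) with hEdef
  have hE : B ^ E ∣ catalan n :=
    Nat.findGreatest_spec (P := fun e => B ^ e ∣ catalan n) (Nat.zero_le _) (by simp)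
  have hE' : ¬ B ^ (E + 1) ∣ catalan n := by
    intro hdvd
    have hle : B ^ (E + 1) ≤ catalan n := Nat.le_of_dvd hcatpos hdvd
    have hlt : E + 1 < B ^ (E + 1) :=
      lt_of_lt_of_le (Nat.lt_pow_self (n := E + 1) (a := 2) (by omega)) (Nat.pow_le_pow_left hB _)
    exact Nat.findGreatest_is_greatest (Nat.lt_succ_self E) (by omega) hdvd
  -- transfer divisibility by b^j to B^j
  have habs : ∀ (j : ℕ) (x : ℤ), b ^ j ∣ x ↔ (B : ℤ) ^ j ∣ x := by
    intro j x
    have h' : ((B : ℤ)) ^ j = ((b ^ j).natAbs : ℤ) := by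
      rw [hBdef, Int.natAbs_pow]; push_cast; ring
    rw [h', Int.natAbs_dvd]
  have hcatE : b ^ E ∣ (catalan n : ℤ) := by
    rw [habs]
    exact_mod_cast Int.natCast_dvd_natCast.mpr hE
  have hcatE' : ¬ b ^ (E + 1) ∣ (catalan n : ℤ) := by
    rw [habs]
    intro h
    exact hE' (Int.natCast_dvd_natCast.mp (by exact_mod_cast h))
  -- even powers of b equal powers of B
  have hb2 : ∀ m : ℕ, b ^ (2 * m) = (B : ℤ) ^ (2 * m) := by
    intro m
    rw [pow_mul, pow_mul, ← Int.natAbs_sq b]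
  set S := ∑ k ∈ range (n + 1),
      ((2 * n).choose (2 * k) : ℤ) * (catalan k : ℤ) * a ^ k * b ^ (2 * n - 2 * k) with hSdef
  have hterm : ∀ k ∈ range n, b ^ (E + 1) ∣
      ((2 * n).choose (2 * k) : ℤ) * (catalan k : ℤ) * a ^ k * b ^ (2 * n - 2 * k) := by
    intro k hkmem
    have hk : k < n := mem_range.mp hkmem
    have hnk : 2 * n - 2 * k = 2 * (n - k) := by omega
    have hdvdN : B ^ (E + 1) ∣ (2 * n).choose (2 * k) * catalan k * B ^ (2 * (n - k)) :=
      key_dvd n k E B hk hB hE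
    have hdvdZ : (B : ℤ) ^ (E + 1) ∣
        ((2 * n).choose (2 * k) : ℤ) * (catalan k : ℤ) * (B : ℤ) ^ (2 * (n - k)) := by
      exact_mod_cast Int.natCast_dvd_natCast.mpr hdvdN
    rw [habs, hnk, hb2]
    calc ((B : ℤ)) ^ (E + 1) ∣
        ((2 * n).choose (2 * k) : ℤ) * (catalan k : ℤ) * (B : ℤ) ^ (2 * (n - k)) := hdvdZ
      _ ∣ ((2 * n).choose (2 * k) : ℤ) * (catalan k : ℤ) * a ^ k *
          (B : ℤ) ^ (2 * (n - k)) := ⟨a ^ k, by ring⟩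
  have hsplit : S = (∑ k ∈ range n,
      ((2 * n).choose (2 * k) : ℤ) * (catalan k : ℤ) * a ^ k * b ^ (2 * n - 2 * k)) +
      (catalan n : ℤ) * a ^ n := by
    rw [hSdef, Finset.sum_range_succ]
    congr 1
    rw [show 2 * n - 2 * n = 0 by omega, Nat.choose_self]
    push_cast
    ring
  have hrest : b ^ (E + 1) ∣ ∑ k ∈ range n,
      ((2 * n).choose (2 * k) : ℤ) * (catalan k : ℤ) * a ^ k * b ^ (2 * n - 2 * k) :=
    Finset.dvd_sum hterm
  have hSE : b ^ E ∣ S := by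
    rw [hsplit]
    exact dvd_add (dvd_trans (pow_dvd_pow b (Nat.le_succ E)) hrest)
      (Dvd.dvd.mul_right hcatE _)
  have hco : IsCoprime a b := Int.isCoprime_iff_gcd_eq_one.mpr hab
  have hSE' : ¬ b ^ (E + 1) ∣ S := by
    intro hdvd
    have hT : b ^ (E + 1) ∣ (catalan n : ℤ) * a ^ n := by
      have := dvd_sub hdvd hrest
      rw [hsplit] at this
      simpa using this
    have hcop : IsCoprime (b ^ (E + 1)) (a ^ n) := (hco.symm).pow
    exact hcatE' (hcop.dvd_of_dvd_mul_right hT)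
  have hSne : S ≠ 0 := by
    intro h
    exact hSE' (h ▸ dvd_zero _)
  refine ⟨hSne, E, ⟨hSE, ?_⟩, ⟨hcatE, ?_⟩⟩
  · intro f hf
    by_contra hfE
    push_neg at hfE
    exact hSE' (dvd_trans (pow_dvd_pow b hfE) hf)
  · intro f hf
    by_contra hfE
    push_neg at hfE
    exact hcatE' (dvd_trans (pow_dvd_pow b hfE) hf)
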